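/- arXiv:2604.15576 — 3 statements merged into one kernel-verified Lean document; each statement's English description precedes it below -/
import Mathlib

section
/- Let ν_1, …, ν_N be probability measures on ℝⁿ with finite second moments, α_1, …, α_N ≥ 0 with Σ_i α_i = 1, ρ = Σ_i α_i ν_i, with component means μ_i = ∫ x dν_i(x). Assume each ν_i has a density p_i with respect to Lebesgue measure, and let f_ML(x) = Σ_i (α_i p_i(x)/p(x)) ℓ_{μ_i} f(x) where p(x) = Σ_i α_i p_i(x) > 0. If f : ℝⁿ → ℝᵐ is differentiable with uniformly quadratically bounded linearization error with constant C ≥ 0, then ∫ ‖f(x) − f_ML(x)‖ dρ(x) ≤ C · Σ_i α_i ∫ ‖x − μ_i‖² dν_i(x). -/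
/-!
Write `w_i(x) = α_i p_i(x)` and `p = ∑ w_i`. The approximation `f_ML(x)` is the center of mass
of the linearizations `ℓ_{μ_i} f(x)` with weights `w_i(x)`, so pointwise
`p(x) ‖f(x) - f_ML(x)‖ ≤ ∑ w_i(x) ‖f(x) - ℓ_{μ_i} f(x)‖ ≤ C ∑ w_i(x) ‖x - μ_i‖²`.
Since `ρ` has Lebesgue density `p` and `ν_i` has density `p_i`, integrating this pointwise bound
against Lebesgue measure gives the claim.
-/

open MeasureTheory

theorem Finset.centerMass_eq_ite_of_nonneg {ι E : Type*} [AddCommGroup E] [Module ℝ E]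
    (t : Finset ι) {w : ι → ℝ} (hw : ∀ i ∈ t, 0 ≤ w i) (z : ι → E) :
    t.centerMass w z =
      if 0 < ∑ i ∈ t, w i then ∑ i ∈ t, (w i / ∑ j ∈ t, w j) • z i else 0 := by
  split_ifs with hpos
  · simp only [Finset.centerMass, Finset.smul_sum, smul_smul, div_eq_inv_mul]
  · have hzero : ∑ i ∈ t, w i = 0 := le_antisymm (not_lt.1 hpos) (Finset.sum_nonneg hw)
    simp [Finset.centerMass, hzero]

theorem Finset.sum_mul_norm_sub_centerMass_le {ι E : Type*} [SeminormedAddCommGroup E]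
    [NormedSpace ℝ E] (t : Finset ι) {w : ι → ℝ} (hw : ∀ i ∈ t, 0 ≤ w i) (y : E) (z : ι → E) :
    (∑ i ∈ t, w i) * ‖y - t.centerMass w z‖ ≤ ∑ i ∈ t, w i * ‖y - z i‖ := by
  rcases eq_or_ne (∑ i ∈ t, w i) 0 with hs | hs
  · rw [hs, zero_mul]
    exact Finset.sum_nonneg fun i hi => mul_nonneg (hw i hi) (norm_nonneg _)
  have hsmul : (∑ i ∈ t, w i) • (y - t.centerMass w z) = ∑ i ∈ t, w i • (y - z i) := by
    simp only [Finset.centerMass, smul_sub, smul_inv_smul₀ hs, Finset.sum_sub_distrib,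
      Finset.sum_smul]
  calc (∑ i ∈ t, w i) * ‖y - t.centerMass w z‖
      = ‖∑ i ∈ t, w i • (y - z i)‖ := by
        rw [← hsmul, norm_smul, Real.norm_of_nonneg (Finset.sum_nonneg hw)]
    _ ≤ ∑ i ∈ t, w i * ‖y - z i‖ := by
        refine (norm_sum_le _ _).trans (Finset.sum_le_sum fun i hi => ?_)
        rw [norm_smul, Real.norm_of_nonneg (hw i hi)]

namespace MeasureTheory

theorem Integrable.norm_sub_const_sq {X E : Type*} [MeasurableSpace X]
    {μ : Measure X} [IsFiniteMeasure μ] [NormedAddCommGroup E] {g : X → E}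
    (hg : AEStronglyMeasurable g μ) (h : Integrable (fun x => ‖g x‖ ^ 2) μ) (c : E) :
    Integrable (fun x => ‖g x - c‖ ^ 2) μ :=
  (memLp_two_iff_integrable_sq_norm (hg.sub aestronglyMeasurable_const)).1
    (((memLp_two_iff_integrable_sq_norm hg).2 h).sub (memLp_const c))

variable {X ι : Type*} [MeasurableSpace X]

theorem Measure.sum_smul_withDensity (μ : Measure X) (t : Finset ι) (r : ι → ENNReal)
    {d : ι → X → ENNReal} (hd : ∀ i, Measurable (d i)) :
    ∑ i ∈ t, r i • μ.withDensity (d i) = μ.withDensity (∑ i ∈ t, r i • d i) := by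
  classical
  induction t using Finset.induction_on with
  | empty => simp
  | insert i t hi ih =>
    rw [Finset.sum_insert hi, Finset.sum_insert hi, ih,
      withDensity_add_left ((hd i).const_smul (r i)), withDensity_smul _ (hd i)]

theorem lintegral_sum_smul_withDensity_le (μ : Measure X) (t : Finset ι) (r : ι → ENNReal)
    {d h : ι → X → ENNReal} (hd : ∀ i, Measurable (d i)) (hh : ∀ i, Measurable (h i))
    (g : X → ENNReal) (hgh : ∀ x, (∑ i ∈ t, r i * d i x) * g x ≤ ∑ i ∈ t, r i * (d i x * h i x)) :
    ∫⁻ x, g x ∂(∑ i ∈ t, r i • μ.withDensity (d i))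
      ≤ ∑ i ∈ t, r i * ∫⁻ x, h i x ∂(μ.withDensity (d i)) := by
  have hmix : Measurable (∑ i ∈ t, r i • d i) := by
    simpa only [← Finset.sum_apply] using
      Finset.measurable_sum t fun i _ => (hd i).const_smul (r i)
  rw [Measure.sum_smul_withDensity μ t r hd]
  calc ∫⁻ x, g x ∂(μ.withDensity (∑ i ∈ t, r i • d i))
      ≤ ∫⁻ x, (∑ i ∈ t, r i * d i x) * g x ∂μ := by
        simpa [Finset.sum_apply] using lintegral_withDensity_le_lintegral_mul μ hmix g
    _ ≤ ∫⁻ x, ∑ i ∈ t, r i * (d i x * h i x) ∂μ := lintegral_mono hgh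
    _ = ∑ i ∈ t, r i * ∫⁻ x, h i x ∂(μ.withDensity (d i)) := by
        rw [lintegral_finsetSum (f := fun i x => r i * (d i x * h i x)) _
          fun i _ => ((hd i).mul (hh i)).const_mul (r i)]
        refine Finset.sum_congr rfl fun i _ => ?_
        rw [lintegral_withDensity_eq_lintegral_mul μ (hd i) (hh i),
          ← lintegral_const_mul _ ((hd i).mul (hh i))]
        rfl

theorem integral_norm_sum_smul_le_of_withDensity {μ : Measure X} {ν : ι → Measure X}
    (t : Finset ι) {α : ι → ℝ} (hα : ∀ i, 0 ≤ α i) {p H : ι → X → ℝ} (hp : ∀ i, Measurable (p i))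
    (hp_nonneg : ∀ i x, 0 ≤ p i x) (hν : ∀ i, ν i = μ.withDensity fun x => ENNReal.ofReal (p i x))
    (hH : ∀ i, Measurable (H i)) (hH_nonneg : ∀ i x, 0 ≤ H i x)
    (hH_int : ∀ i, Integrable (H i) (ν i))
    {E : Type*} [SeminormedAddCommGroup E] (G : X → E)
    (hGH : ∀ x, (∑ i ∈ t, α i * p i x) * ‖G x‖ ≤ ∑ i ∈ t, α i * (p i x * H i x)) :
    ∫ x, ‖G x‖ ∂(∑ i ∈ t, ENNReal.ofReal (α i) • ν i) ≤ ∑ i ∈ t, α i * ∫ x, H i x ∂(ν i) := by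
  have hw : ∀ i x, 0 ≤ α i * p i x := fun i x => mul_nonneg (hα i) (hp_nonneg i x)
  have hlintegral := lintegral_sum_smul_withDensity_le μ t (fun i => ENNReal.ofReal (α i))
    (fun i => (hp i).ennreal_ofReal) (fun i => (hH i).ennreal_ofReal)
    (fun x => ENNReal.ofReal ‖G x‖) fun x => by
      calc (∑ i ∈ t, ENNReal.ofReal (α i) * ENNReal.ofReal (p i x)) * ENNReal.ofReal ‖G x‖
          = ENNReal.ofReal ((∑ i ∈ t, α i * p i x) * ‖G x‖) := by
            rw [ENNReal.ofReal_mul (Finset.sum_nonneg fun i _ => hw i x),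
              ENNReal.ofReal_sum_of_nonneg fun i _ => hw i x]
            simp only [ENNReal.ofReal_mul (hα _)]
        _ ≤ ENNReal.ofReal (∑ i ∈ t, α i * (p i x * H i x)) := ENNReal.ofReal_le_ofReal (hGH x)
        _ = _ := by
            rw [ENNReal.ofReal_sum_of_nonneg fun i _ => mul_nonneg (hα i)
              (mul_nonneg (hp_nonneg i x) (hH_nonneg i x))]
            simp only [ENNReal.ofReal_mul (hα _), ENNReal.ofReal_mul (hp_nonneg _ x)]
  simp only [← hν] at hlintegral
  have hbound_nonneg : 0 ≤ ∑ i ∈ t, α i * ∫ x, H i x ∂(ν i) :=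
    Finset.sum_nonneg fun i _ => mul_nonneg (hα i) (integral_nonneg (hH_nonneg i))
  have hbound : ∑ i ∈ t, ENNReal.ofReal (α i) * ∫⁻ x, ENNReal.ofReal (H i x) ∂(ν i)
      = ENNReal.ofReal (∑ i ∈ t, α i * ∫ x, H i x ∂(ν i)) := by
    rw [ENNReal.ofReal_sum_of_nonneg fun i _ =>
      mul_nonneg (hα i) (integral_nonneg (hH_nonneg i))]
    refine Finset.sum_congr rfl fun i _ => ?_
    rw [ENNReal.ofReal_mul (hα i),
      ofReal_integral_eq_lintegral_ofReal (hH_int i) (ae_of_all _ (hH_nonneg i))]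
  calc _ ≤ (∫⁻ x, ENNReal.ofReal ‖G x‖ ∂(∑ i ∈ t, ENNReal.ofReal (α i) • ν i)).toReal := by
        simpa only [norm_norm] using (Real.le_norm_self _).trans
          (norm_integral_le_lintegral_norm fun x => ‖G x‖)
    _ ≤ _ := ENNReal.toReal_le_of_le_ofReal hbound_nonneg (hlintegral.trans_eq hbound)

end MeasureTheory

theorem multiple_linearization_error_bound_general {n m N : ℕ}
    (ν : Fin N → Measure (EuclideanSpace ℝ (Fin n)))
    (hprob : ∀ i, IsProbabilityMeasure (ν i))
    (α : Fin N → ℝ) (hα : ∀ i, 0 ≤ α i)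
    (p : Fin N → EuclideanSpace ℝ (Fin n) → ℝ)
    (hp_meas : ∀ i, Measurable (p i)) (hp_nonneg : ∀ i x, 0 ≤ p i x)
    (hdens : ∀ i, ν i = volume.withDensity (fun x => ENNReal.ofReal (p i x)))
    (μ : Fin N → EuclideanSpace ℝ (Fin n))
    (hmom2 : ∀ i, Integrable (fun x => ‖x‖ ^ 2) (ν i))
    (f : EuclideanSpace ℝ (Fin n) → EuclideanSpace ℝ (Fin m))
    (C : ℝ) (hC : 0 ≤ C)
    (hquad : ∀ x₀ x, ‖f x - (f x₀ + fderiv ℝ f x₀ (x - x₀))‖ ≤ C * ‖x - x₀‖ ^ 2)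
    (fML : EuclideanSpace ℝ (Fin n) → EuclideanSpace ℝ (Fin m))
    (hfML : ∀ x, fML x =
      if 0 < ∑ i, α i * p i x then
        ∑ i, ((α i * p i x) / (∑ j, α j * p j x)) •
          (f (μ i) + fderiv ℝ f (μ i) (x - μ i))
      else 0) :
    ∫ x, ‖f x - fML x‖ ∂(∑ i, ENNReal.ofReal (α i) • ν i)
      ≤ C * ∑ i, α i * ∫ x, ‖x - μ i‖ ^ 2 ∂(ν i) := by
  have hw : ∀ x, ∀ i ∈ Finset.univ, 0 ≤ α i * p i x :=
    fun x i _ => mul_nonneg (hα i) (hp_nonneg i x)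
  have hpointwise : ∀ x, (∑ i, α i * p i x) * ‖f x - fML x‖
      ≤ ∑ i, α i * (p i x * (C * ‖x - μ i‖ ^ 2)) := fun x => by
    rw [hfML x, ← Finset.univ.centerMass_eq_ite_of_nonneg (hw x)]
    refine (Finset.univ.sum_mul_norm_sub_centerMass_le (hw x) _ _).trans
      (Finset.sum_le_sum fun i hi => ?_)
    rw [← mul_assoc]
    exact mul_le_mul_of_nonneg_left (hquad _ _) (hw x i hi)
  have hint : ∀ i, Integrable (fun x => C * ‖x - μ i‖ ^ 2) (ν i) := fun i =>
    ((hmom2 i).norm_sub_const_sq aestronglyMeasurable_id (μ i)).const_mul C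
  calc _ ≤ ∑ i, α i * ∫ x, C * ‖x - μ i‖ ^ 2 ∂(ν i) :=
        integral_norm_sum_smul_le_of_withDensity _ hα hp_meas hp_nonneg hdens
          (fun i => by fun_prop) (fun i x => by positivity) hint _ hpointwise
    _ = _ := by
        simp only [integral_const_mul, Finset.mul_sum]
        exact Finset.sum_congr rfl fun i _ => by ring

/-- Multiple-linearization expected error bound: for a Gaussian-mixture-type measure
`ρ = Σ_i α_i ν_i` with component means `μ_i` and component densities `p_i`, and a
differentiable `f` with uniformly quadratically bounded linearization error with
constant `C ≥ 0`, the multiple-linearization approximation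
`f_ML(x) = Σ_i (α_i p_i(x)/p(x)) ℓ_{μ_i} f(x)` satisfies
`∫ ‖f − f_ML‖ dρ ≤ C · Σ_i α_i ∫ ‖x − μ_i‖² dν_i`. -/
theorem multiple_linearization_error_bound {n m N : ℕ}
    (ν : Fin N → Measure (EuclideanSpace ℝ (Fin n)))
    (hprob : ∀ i, IsProbabilityMeasure (ν i))
    (α : Fin N → ℝ) (hα : ∀ i, 0 ≤ α i) (hαsum : ∑ i, α i = 1)
    (p : Fin N → EuclideanSpace ℝ (Fin n) → ℝ)
    (hp_meas : ∀ i, Measurable (p i)) (hp_nonneg : ∀ i x, 0 ≤ p i x)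
    (hdens : ∀ i, ν i = volume.withDensity (fun x => ENNReal.ofReal (p i x)))
    (μ : Fin N → EuclideanSpace ℝ (Fin n))
    (hμ : ∀ i, μ i = ∫ x, x ∂(ν i))
    (hmom1 : ∀ i, Integrable (fun x => x) (ν i))
    (hmom2 : ∀ i, Integrable (fun x => ‖x‖ ^ 2) (ν i))
    (f : EuclideanSpace ℝ (Fin n) → EuclideanSpace ℝ (Fin m))
    (hf : Differentiable ℝ f) (C : ℝ) (hC : 0 ≤ C)
    (hquad : ∀ x₀ x, ‖f x - (f x₀ + fderiv ℝ f x₀ (x - x₀))‖ ≤ C * ‖x - x₀‖ ^ 2)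
    (fML : EuclideanSpace ℝ (Fin n) → EuclideanSpace ℝ (Fin m))
    (hfML : ∀ x, fML x =
      if 0 < ∑ i, α i * p i x then
        ∑ i, ((α i * p i x) / (∑ j, α j * p j x)) •
          (f (μ i) + fderiv ℝ f (μ i) (x - μ i))
      else 0) :
    ∫ x, ‖f x - fML x‖ ∂(∑ i, ENNReal.ofReal (α i) • ν i)
      ≤ C * ∑ i, α i * ∫ x, ‖x - μ i‖ ^ 2 ∂(ν i) :=
  multiple_linearization_error_bound_general ν hprob α hα p hp_meas hp_nonneg hdens μ hmom2 f C hC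
    hquad fML hfML
end

section
/- (Theorem 1 of the paper.) Let ν_1, …, ν_N be probability measures on ℝⁿ with finite second moments, α_1, …, α_N ≥ 0 with Σ_i α_i = 1, ρ = Σ_i α_i ν_i, component means μ_i = ∫ x dν_i(x), mixture mean μ = Σ_i α_i μ_i, and assume each ν_i has a density p_i with respect to Lebesgue measure. If f : ℝⁿ → ℝᵐ is differentiable with uniformly quadratically bounded linearization error with constant C ≥ 0, then the multiple-linearization error obeys the single-linearization upper bound: ∫ ‖f(x) − f_ML(x)‖ dρ(x) ≤ C · Σ_i α_i ∫ ‖x − μ_i‖² dν_i(x) ≤ C · ∫ ‖x − μ‖² dρ(x), where the right-hand side is the upper bound ε_SL on ∫ ‖f − ℓ_μ f‖ dρ. -/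
/-!
Where the mixture density `P = ∑ αᵢ pᵢ` is positive, `f - f_ML = ∑ (αᵢ pᵢ / P) • (f - ℓ_{μᵢ} f)`
is a convex combination of linearization errors, so `P ‖f - f_ML‖ ≤ C ∑ αᵢ pᵢ ‖x - μᵢ‖²`
everywhere; integrating against Lebesgue measure, with respect to which `ρ` has density `P`,
gives the first inequality. The second holds term by term, because the mean minimizes the
expected squared distance: `∫ ‖x - c‖² dνᵢ = ∫ ‖x - μᵢ‖² dνᵢ + ‖μᵢ - c‖²`.
-/

open MeasureTheory
open scoped ENNReal RealInnerProductSpace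

theorem sum_mul_norm_sub_weighted_mean_le {ι E : Type*} [SeminormedAddCommGroup E]
    [NormedSpace ℝ E] (s : Finset ι) (c : ι → ℝ) (hc : ∀ i ∈ s, 0 ≤ c i) (y : E) (z : ι → E) :
    (∑ i ∈ s, c i) * ‖y - if 0 < ∑ j ∈ s, c j then ∑ i ∈ s, (c i / ∑ j ∈ s, c j) • z i else 0‖
      ≤ ∑ i ∈ s, c i * ‖y - z i‖ := by
  split_ifs with hpos
  · have hmean : (∑ j ∈ s, c j) • (y - ∑ i ∈ s, (c i / ∑ j ∈ s, c j) • z i)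
        = ∑ i ∈ s, c i • (y - z i) := by
      simp only [smul_sub, Finset.smul_sum, smul_smul, mul_div_cancel₀ _ hpos.ne',
        Finset.sum_sub_distrib, Finset.sum_smul]
    calc _ = ‖∑ i ∈ s, c i • (y - z i)‖ := by
          rw [← hmean, norm_smul, Real.norm_of_nonneg hpos.le]
      _ ≤ ∑ i ∈ s, ‖c i • (y - z i)‖ := norm_sum_le _ _
      _ = ∑ i ∈ s, c i * ‖y - z i‖ := Finset.sum_congr rfl fun i hi => by
          rw [norm_smul, Real.norm_of_nonneg (hc i hi)]
  · rw [le_antisymm (not_lt.1 hpos) (Finset.sum_nonneg hc), zero_mul]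
    exact Finset.sum_nonneg fun i hi => mul_nonneg (hc i hi) (norm_nonneg _)

theorem sum_ofReal_smul_withDensity_ofReal {X ι : Type*} [MeasurableSpace X] (μ : Measure X)
    (s : Finset ι) (α : ι → ℝ) (hα : ∀ i ∈ s, 0 ≤ α i) (p : ι → X → ℝ)
    (hp : ∀ i ∈ s, Measurable (p i)) (hp0 : ∀ i ∈ s, ∀ x, 0 ≤ p i x) :
    ∑ i ∈ s, ENNReal.ofReal (α i) • μ.withDensity (fun x => ENNReal.ofReal (p i x))
      = μ.withDensity (fun x => ENNReal.ofReal (∑ i ∈ s, α i * p i x)) := by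
  ext t ht
  simp only [Measure.finsetSum_apply, Measure.smul_apply, withDensity_apply _ ht, smul_eq_mul]
  have hmeas : ∀ i ∈ s, Measurable fun x => ENNReal.ofReal (α i * p i x) :=
    fun i hi => ((hp i hi).const_mul _).ennreal_ofReal
  simp_rw [ENNReal.ofReal_sum_of_nonneg fun i hi => mul_nonneg (hα i hi) (hp0 i hi _)]
  rw [lintegral_finsetSum _ hmeas]
  refine Finset.sum_congr rfl fun i hi => ?_
  simp_rw [ENNReal.ofReal_mul (hα i hi)]
  exact (lintegral_const_mul _ (hp i hi).ennreal_ofReal).symm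

section WithDensityOfReal

variable {X E : Type*} [MeasurableSpace X] [NormedAddCommGroup E] [NormedSpace ℝ E]
  {μ : Measure X} {p : X → ℝ}

theorem integral_withDensity_ofReal (hp : Measurable p) (hp0 : ∀ x, 0 ≤ p x) (g : X → E) :
    ∫ x, g x ∂μ.withDensity (fun x => ENNReal.ofReal (p x)) = ∫ x, p x • g x ∂μ := by
  simp only [integral_withDensity_eq_integral_toReal_smul hp.ennreal_ofReal
    (ae_of_all _ fun _ => ENNReal.ofReal_lt_top), ENNReal.toReal_ofReal (hp0 _)]

theorem integrable_withDensity_ofReal_iff (hp : Measurable p) (hp0 : ∀ x, 0 ≤ p x) {g : X → E} :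
    Integrable g (μ.withDensity fun x => ENNReal.ofReal (p x))
      ↔ Integrable (fun x => p x • g x) μ := by
  simp only [integrable_withDensity_iff_integrable_smul' hp.ennreal_ofReal
    (ae_of_all _ fun _ => ENNReal.ofReal_lt_top), ENNReal.toReal_ofReal (hp0 _)]

end WithDensityOfReal

theorem integral_mixture_le_of_mul_le {X ι : Type*} [MeasurableSpace X] (μ : Measure X)
    (s : Finset ι) (α : ι → ℝ) (hα : ∀ i ∈ s, 0 ≤ α i) (ν : ι → Measure X) (p : ι → X → ℝ)
    (hp : ∀ i ∈ s, Measurable (p i)) (hp0 : ∀ i ∈ s, ∀ x, 0 ≤ p i x)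
    (hν : ∀ i ∈ s, ν i = μ.withDensity (fun x => ENNReal.ofReal (p i x)))
    (h : X → ℝ) (hh : ∀ x, 0 ≤ h x) (g : ι → X → ℝ) (hg : ∀ i ∈ s, Integrable (g i) (ν i))
    (hhg : ∀ x, (∑ i ∈ s, α i * p i x) * h x ≤ ∑ i ∈ s, α i * p i x * g i x) :
    ∫ x, h x ∂(∑ i ∈ s, ENNReal.ofReal (α i) • ν i) ≤ ∑ i ∈ s, α i * ∫ x, g i x ∂(ν i) := by
  have hpg : ∀ i ∈ s, Integrable (fun x => p i x * g i x) μ := fun i hi =>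
    (integrable_withDensity_ofReal_iff (hp i hi) (hp0 i hi)).1 (hν i hi ▸ hg i hi)
  have hP : Measurable fun x => ∑ i ∈ s, α i * p i x :=
    Finset.measurable_sum _ fun i hi => (hp i hi).const_mul _
  have hP0 : ∀ x, 0 ≤ ∑ i ∈ s, α i * p i x :=
    fun x => Finset.sum_nonneg fun i hi => mul_nonneg (hα i hi) (hp0 i hi x)
  rw [Finset.sum_congr rfl fun i hi => by rw [hν i hi],
    sum_ofReal_smul_withDensity_ofReal μ s α hα p hp hp0, integral_withDensity_ofReal hP hP0]
  calc ∫ x, (∑ i ∈ s, α i * p i x) • h x ∂μ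
      ≤ ∫ x, ∑ i ∈ s, α i * (p i x * g i x) ∂μ := by
        refine integral_mono_of_nonneg (ae_of_all _ fun x => mul_nonneg (hP0 x) (hh x))
          (integrable_finsetSum _ fun i hi => (hpg i hi).const_mul _) (ae_of_all _ fun x => ?_)
        simpa only [smul_eq_mul, mul_assoc] using hhg x
    _ = ∑ i ∈ s, α i * ∫ x, g i x ∂(ν i) := by
        rw [integral_finsetSum _ fun i hi => (hpg i hi).const_mul _]
        refine Finset.sum_congr rfl fun i hi => ?_
        simp only [integral_const_mul, hν i hi, integral_withDensity_ofReal (hp i hi) (hp0 i hi),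
          smul_eq_mul]

theorem integral_sum_ofReal_smul_measure {X ι : Type*} [MeasurableSpace X] (s : Finset ι)
    (α : ι → ℝ) (hα : ∀ i ∈ s, 0 ≤ α i) (ν : ι → Measure X) {g : X → ℝ}
    (hg : ∀ i ∈ s, Integrable g (ν i)) :
    ∫ x, g x ∂(∑ i ∈ s, ENNReal.ofReal (α i) • ν i) = ∑ i ∈ s, α i * ∫ x, g x ∂(ν i) := by
  rw [integral_finsetSum_measure fun i hi => (hg i hi).smul_measure ENNReal.ofReal_ne_top]
  refine Finset.sum_congr rfl fun i hi => ?_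
  rw [integral_smul_measure, ENNReal.toReal_ofReal (hα i hi), smul_eq_mul]

theorem MeasureTheory.MemLp.integrable_norm_sub_sq {Ω E : Type*} [MeasurableSpace Ω]
    [NormedAddCommGroup E] {ν : Measure Ω} [IsFiniteMeasure ν] {Y : Ω → E} (hY : MemLp Y 2 ν)
    (c : E) : Integrable (fun ω => ‖Y ω - c‖ ^ 2) ν :=
  (hY.sub (memLp_const c)).integrable_norm_pow two_ne_zero

section MeanSquaredDeviation

variable {Ω E : Type*} [MeasurableSpace Ω] [NormedAddCommGroup E] [InnerProductSpace ℝ E]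
  [CompleteSpace E] {ν : Measure Ω} [IsProbabilityMeasure ν] {Y : Ω → E}

theorem integral_norm_sub_sq_eq_add (hY : MemLp Y 2 ν) (c : E) :
    ∫ ω, ‖Y ω - c‖ ^ 2 ∂ν = ∫ ω, ‖Y ω - ∫ ω', Y ω' ∂ν‖ ^ 2 ∂ν + ‖(∫ ω, Y ω ∂ν) - c‖ ^ 2 := by
  set m := ∫ ω, Y ω ∂ν
  have hYm : Integrable (fun ω => Y ω - m) ν := (hY.integrable one_le_two).sub (integrable_const m)
  have hcross : Integrable (fun ω => 2 * ⟪m - c, Y ω - m⟫) ν := (hYm.const_inner _).const_mul 2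
  have hcentered : ∫ ω, (Y ω - m) ∂ν = 0 := by
    rw [integral_sub (hY.integrable one_le_two) (integrable_const m), integral_const,
      probReal_univ, one_smul, sub_self]
  calc ∫ ω, ‖Y ω - c‖ ^ 2 ∂ν
      = ∫ ω, (‖Y ω - m‖ ^ 2 + 2 * ⟪m - c, Y ω - m⟫ + ‖m - c‖ ^ 2) ∂ν := by
        refine integral_congr_ae (ae_of_all _ fun ω => ?_)
        dsimp only
        rw [real_inner_comm, ← norm_add_sq_real, sub_add_sub_cancel]
    _ = ∫ ω, ‖Y ω - m‖ ^ 2 ∂ν + ‖m - c‖ ^ 2 := by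
        rw [integral_add ((hY.integrable_norm_sub_sq m).fun_add hcross) (integrable_const _),
          integral_add (hY.integrable_norm_sub_sq m) hcross, integral_const_mul,
          integral_inner hYm, hcentered, inner_zero_right, integral_const, probReal_univ,
          one_smul]
        ring

theorem integral_norm_sub_integral_sq_le (hY : MemLp Y 2 ν) (c : E) :
    ∫ ω, ‖Y ω - ∫ ω', Y ω' ∂ν‖ ^ 2 ∂ν ≤ ∫ ω, ‖Y ω - c‖ ^ 2 ∂ν := by
  rw [integral_norm_sub_sq_eq_add hY c]
  exact le_add_of_nonneg_right (sq_nonneg _)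

end MeanSquaredDeviation

theorem multiple_linearization_bound_le_single_linearization_bound_general {n m N : ℕ}
    (ν : Fin N → Measure (EuclideanSpace ℝ (Fin n)))
    (hprob : ∀ i, IsProbabilityMeasure (ν i))
    (α : Fin N → ℝ) (hα : ∀ i, 0 ≤ α i)
    (p : Fin N → EuclideanSpace ℝ (Fin n) → ℝ)
    (hp_meas : ∀ i, Measurable (p i)) (hp_nonneg : ∀ i x, 0 ≤ p i x)
    (hdens : ∀ i, ν i = volume.withDensity (fun x => ENNReal.ofReal (p i x)))
    (μ : Fin N → EuclideanSpace ℝ (Fin n))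
    (hμ : ∀ i, μ i = ∫ x, x ∂(ν i))
    (μbar : EuclideanSpace ℝ (Fin n))
    (hmom2 : ∀ i, Integrable (fun x => ‖x‖ ^ 2) (ν i))
    (f : EuclideanSpace ℝ (Fin n) → EuclideanSpace ℝ (Fin m))
    (C : ℝ) (hC : 0 ≤ C)
    (hquad : ∀ x₀ x, ‖f x - (f x₀ + fderiv ℝ f x₀ (x - x₀))‖ ≤ C * ‖x - x₀‖ ^ 2)
    (fML : EuclideanSpace ℝ (Fin n) → EuclideanSpace ℝ (Fin m))
    (hfML : ∀ x, fML x =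
      if 0 < ∑ i, α i * p i x then
        ∑ i, ((α i * p i x) / (∑ j, α j * p j x)) •
          (f (μ i) + fderiv ℝ f (μ i) (x - μ i))
      else 0) :
    ∫ x, ‖f x - fML x‖ ∂(∑ i, ENNReal.ofReal (α i) • ν i)
        ≤ C * ∑ i, α i * ∫ x, ‖x - μ i‖ ^ 2 ∂(ν i)
    ∧ C * ∑ i, α i * ∫ x, ‖x - μ i‖ ^ 2 ∂(ν i)
        ≤ C * ∫ x, ‖x - μbar‖ ^ 2 ∂(∑ i, ENNReal.ofReal (α i) • ν i) := by
  have hL2 : ∀ i, MemLp (fun x => x) 2 (ν i) := fun i =>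
    (memLp_two_iff_integrable_sq_norm aestronglyMeasurable_id).2 (hmom2 i)
  have hpointwise : ∀ x, (∑ i, α i * p i x) * ‖f x - fML x‖
      ≤ ∑ i, α i * p i x * (C * ‖x - μ i‖ ^ 2) := fun x => by
    rw [hfML x]
    refine (sum_mul_norm_sub_weighted_mean_le _ _ (fun i _ => mul_nonneg (hα i) (hp_nonneg i x))
      _ _).trans (Finset.sum_le_sum fun i _ => ?_)
    exact mul_le_mul_of_nonneg_left (hquad (μ i) x) (mul_nonneg (hα i) (hp_nonneg i x))
  constructor
  · calc ∫ x, ‖f x - fML x‖ ∂(∑ i, ENNReal.ofReal (α i) • ν i)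
        ≤ ∑ i, α i * ∫ x, C * ‖x - μ i‖ ^ 2 ∂(ν i) :=
          integral_mixture_le_of_mul_le volume _ α (fun i _ => hα i) ν p (fun i _ => hp_meas i)
            (fun i _ => hp_nonneg i) (fun i _ => hdens i) _ (fun _ => norm_nonneg _) _
            (fun i _ => ((hL2 i).integrable_norm_sub_sq (μ i)).const_mul C) hpointwise
      _ = C * ∑ i, α i * ∫ x, ‖x - μ i‖ ^ 2 ∂(ν i) := by
          simp only [integral_const_mul, Finset.mul_sum, mul_left_comm]
  · rw [integral_sum_ofReal_smul_measure _ α (fun i _ => hα i) ν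
      fun i _ => (hL2 i).integrable_norm_sub_sq μbar]
    gcongr C * ∑ i, α i * ?_ with i
    · exact hα i
    · rw [hμ i]
      exact integral_norm_sub_integral_sq_le (hL2 i) μbar

/-- Theorem 1 of the paper: for a mixture `ρ = Σ_i α_i ν_i` with component means `μ_i`,
mixture mean `μ = Σ_i α_i μ_i`, and a differentiable `f` with uniformly quadratically
bounded linearization error with constant `C ≥ 0`, the multiple-linearization error
obeys `∫ ‖f − f_ML‖ dρ ≤ C Σ_i α_i ∫ ‖x − μ_i‖² dν_i =: ε_ML`, and
`ε_ML ≤ C ∫ ‖x − μ‖² dρ =: ε_SL`, the single-linearization upper bound. -/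
theorem multiple_linearization_bound_le_single_linearization_bound {n m N : ℕ}
    (ν : Fin N → Measure (EuclideanSpace ℝ (Fin n)))
    (hprob : ∀ i, IsProbabilityMeasure (ν i))
    (α : Fin N → ℝ) (hα : ∀ i, 0 ≤ α i) (hαsum : ∑ i, α i = 1)
    (p : Fin N → EuclideanSpace ℝ (Fin n) → ℝ)
    (hp_meas : ∀ i, Measurable (p i)) (hp_nonneg : ∀ i x, 0 ≤ p i x)
    (hdens : ∀ i, ν i = volume.withDensity (fun x => ENNReal.ofReal (p i x)))
    (μ : Fin N → EuclideanSpace ℝ (Fin n))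
    (hμ : ∀ i, μ i = ∫ x, x ∂(ν i))
    (μbar : EuclideanSpace ℝ (Fin n)) (hμbar : μbar = ∑ i, α i • μ i)
    (hmom1 : ∀ i, Integrable (fun x => x) (ν i))
    (hmom2 : ∀ i, Integrable (fun x => ‖x‖ ^ 2) (ν i))
    (f : EuclideanSpace ℝ (Fin n) → EuclideanSpace ℝ (Fin m))
    (hf : Differentiable ℝ f) (C : ℝ) (hC : 0 ≤ C)
    (hquad : ∀ x₀ x, ‖f x - (f x₀ + fderiv ℝ f x₀ (x - x₀))‖ ≤ C * ‖x - x₀‖ ^ 2)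
    (fML : EuclideanSpace ℝ (Fin n) → EuclideanSpace ℝ (Fin m))
    (hfML : ∀ x, fML x =
      if 0 < ∑ i, α i * p i x then
        ∑ i, ((α i * p i x) / (∑ j, α j * p j x)) •
          (f (μ i) + fderiv ℝ f (μ i) (x - μ i))
      else 0) :
    ∫ x, ‖f x - fML x‖ ∂(∑ i, ENNReal.ofReal (α i) • ν i)
        ≤ C * ∑ i, α i * ∫ x, ‖x - μ i‖ ^ 2 ∂(ν i)
    ∧ C * ∑ i, α i * ∫ x, ‖x - μ i‖ ^ 2 ∂(ν i)
        ≤ C * ∫ x, ‖x - μbar‖ ^ 2 ∂(∑ i, ENNReal.ofReal (α i) • ν i) :=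
  multiple_linearization_bound_le_single_linearization_bound_general ν hprob α hα p hp_meas
    hp_nonneg hdens μ hμ μbar hmom2 f C hC hquad fML hfML
end

section
/- (Theorem 2 of the paper.) Let ν_1, …, ν_N be probability measures on ℝⁿ with finite first moments, α_1, …, α_N ≥ 0 with Σ_i α_i = 1, ρ = Σ_i α_i ν_i, component means μ_i = ∫ x dν_i(x), mixture mean μ = Σ_i α_i μ_i, and assume each ν_i has a density p_i with respect to Lebesgue measure. Let f : ℝⁿ → ℝᵐ be differentiable with each component function f⁽ᵏ⁾ : ℝⁿ → ℝ either convex on ℝⁿ or concave on ℝⁿ, and assume each f⁽ᵏ⁾ is integrable with respect to each ν_i. Then the multiple-linearization approximation is at least as accurate as the single linearization in expected 1-norm: ∫ ‖f(x) − f_ML(x)‖₁ dρ(x) ≤ ∫ ‖f(x) − ℓ_μ f(x)‖₁ dρ(x), where ‖y‖₁ = Σ_k |y_k|. -/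
/-!
For a convex component `g` every tangent plane lies below `g`, so both `g - ℓ_μ g` and
`g - g_ML` are nonnegative (the latter because `g_ML` is a pointwise convex combination of
tangent planes, ρ-a.e.), and the absolute values can be dropped. It remains to compare the
integrals of the two approximations. Since `ρ` has density `p` and the weight `α_i p_i / p` is
the density of `α_i ν_i` with respect to `ρ`, `∫ g_ML dρ = Σ α_i ∫ ℓ_{μ_i} g dν_i = Σ α_i g(μ_i)`,
while `∫ ℓ_μ g dρ = g(μ)`; Jensen's inequality gives `g(μ) ≤ Σ α_i g(μ_i)`.
Concave components reduce to convex ones by negation.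
-/

open MeasureTheory

section Linearization

variable {E F : Type*} [NormedAddCommGroup E] [NormedSpace ℝ E]
  [NormedAddCommGroup F] [NormedSpace ℝ F]

noncomputable def linearization (f : E → F) (a x : E) : F :=
  f a + fderiv ℝ f a (x - a)

@[simp]
lemma linearization_self (f : E → F) (a : E) : linearization f a a = f a := by
  simp [linearization]

lemma linearization_neg (g : E → ℝ) (a x : E) :
    linearization (-g) a x = -linearization g a x := by
  simp only [linearization, fderiv_neg, Pi.neg_apply, neg_apply]
  ring

lemma linearization_comp_clm {G : Type*} [NormedAddCommGroup G] [NormedSpace ℝ G]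
    (L : F →L[ℝ] G) {f : E → F} {a : E} (hf : DifferentiableAt ℝ f a) (x : E) :
    linearization (fun y => L (f y)) a x = L (linearization f a x) := by
  have hL : fderiv ℝ (fun y => L (f y)) a = L.comp (fderiv ℝ f a) :=
    (L.hasFDerivAt.comp a hf.hasFDerivAt).fderiv
  simp [linearization, hL]

lemma ConvexOn.linearization_le {g : E → ℝ} (hg : ConvexOn ℝ Set.univ g) {a : E}
    (hd : DifferentiableAt ℝ g a) (x : E) : linearization g a x ≤ g x := by
  have hconv : ConvexOn ℝ Set.univ (g ∘ AffineMap.lineMap (k := ℝ) a x) := hg.comp_affineMap _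
  have hderiv : HasDerivAt (g ∘ AffineMap.lineMap (k := ℝ) a x) (fderiv ℝ g a (x - a)) 0 := by
    have hd' : DifferentiableAt ℝ g (AffineMap.lineMap a x (0 : ℝ)) := by simpa using hd
    simpa using hd'.hasFDerivAt.comp_hasDerivAt (0 : ℝ) AffineMap.hasDerivAt_lineMap
  have hslope := hconv.le_slope_of_hasDerivAt (Set.mem_univ 0) (Set.mem_univ 1) one_pos hderiv
  simp only [slope_def_field, Function.comp_apply, AffineMap.lineMap_apply_zero,
    AffineMap.lineMap_apply_one, sub_zero, div_one] at hslope
  rw [linearization]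
  linarith

variable [MeasurableSpace E] {ν : Measure E}

lemma integrable_linearization [IsFiniteMeasure ν] (hν : Integrable (fun x => x) ν)
    (f : E → F) (a : E) : Integrable (linearization f a) ν :=
  (integrable_const _).add ((fderiv ℝ f a).integrable_comp (hν.sub (integrable_const a)))

lemma integral_linearization [CompleteSpace E] [CompleteSpace F] [IsProbabilityMeasure ν]
    (hν : Integrable (fun x => x) ν) (f : E → F) (a : E) :
    ∫ x, linearization f a x ∂ν = linearization f a (∫ x, x ∂ν) := by
  have hsub : Integrable (fun x => x - a) ν := hν.sub (integrable_const a)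
  simp only [linearization]
  rw [integral_add (integrable_const _) ((fderiv ℝ f a).integrable_comp hsub),
    (fderiv ℝ f a).integral_comp_comm hsub, integral_sub hν (integrable_const a)]
  simp

end Linearization

section MixtureWeight

variable {Ω ι : Type*} [Fintype ι]

/-- Where `∑ j, α j * p j x = 0` the weight is `0` by the convention `a / 0 = 0`; this is what
makes `∑ i, mixtureWeight α p i x • v i` agree with the `else 0` branch of the paper's `f_ML`. -/
noncomputable def mixtureWeight (α : ι → ℝ) (p : ι → Ω → ℝ) (i : ι) (x : Ω) : ℝ :=
  α i * p i x / ∑ j, α j * p j x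

variable {α : ι → ℝ} {p : ι → Ω → ℝ}

lemma mixtureWeight_nonneg (hα : ∀ i, 0 ≤ α i) (hp : ∀ i x, 0 ≤ p i x) (i : ι) (x : Ω) :
    0 ≤ mixtureWeight α p i x :=
  div_nonneg (mul_nonneg (hα i) (hp i x))
    (Finset.sum_nonneg fun j _ => mul_nonneg (hα j) (hp j x))

lemma sum_mixtureWeight {x : Ω} (hx : 0 < ∑ j, α j * p j x) :
    ∑ i, mixtureWeight α p i x = 1 := by
  simp only [mixtureWeight, ← Finset.sum_div, div_self hx.ne']

lemma sum_mul_mixtureWeight (hα : ∀ i, 0 ≤ α i) (hp : ∀ i x, 0 ≤ p i x) (i : ι) (x : Ω) :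
    (∑ j, α j * p j x) * mixtureWeight α p i x = α i * p i x := by
  rcases eq_or_ne (∑ j, α j * p j x) 0 with h | h
  · rw [h, zero_mul, eq_comm]
    exact (Finset.sum_eq_zero_iff_of_nonneg fun j _ => mul_nonneg (hα j) (hp j x)).1 h i
      (Finset.mem_univ i)
  · exact mul_div_cancel₀ _ h

lemma ite_sum_div_smul_eq_sum_mixtureWeight_smul {E : Type*} [AddCommMonoid E] [Module ℝ E]
    (hα : ∀ i, 0 ≤ α i) (hp : ∀ i x, 0 ≤ p i x) (v : ι → E) (x : Ω) :
    (if 0 < ∑ j, α j * p j x then ∑ i, (α i * p i x / ∑ j, α j * p j x) • v i else 0) =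
      ∑ i, mixtureWeight α p i x • v i := by
  split_ifs with hx
  · rfl
  · have h0 : ∑ j, α j * p j x = 0 :=
      le_antisymm (not_lt.1 hx) (Finset.sum_nonneg fun j _ => mul_nonneg (hα j) (hp j x))
    simp [mixtureWeight, h0]

end MixtureWeight

section Mixture

variable {Ω ι : Type*} [MeasurableSpace Ω] [Fintype ι]

noncomputable def mixture (α : ι → ℝ) (ν : ι → Measure Ω) : Measure Ω :=
  ∑ i, ENNReal.ofReal (α i) • ν i

variable {α : ι → ℝ} {ν : ι → Measure Ω}

lemma integrable_mixture {E : Type*} [NormedAddCommGroup E] {F : Ω → E}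
    (hF : ∀ i, Integrable F (ν i)) : Integrable F (mixture α ν) :=
  integrable_finsetSum_measure.2 fun i _ => (hF i).smul_measure ENNReal.ofReal_ne_top

lemma integral_mixture {E : Type*} [NormedAddCommGroup E] [NormedSpace ℝ E] (hα : ∀ i, 0 ≤ α i)
    {F : Ω → E} (hF : ∀ i, Integrable F (ν i)) :
    ∫ x, F x ∂(mixture α ν) = ∑ i, α i • ∫ x, F x ∂(ν i) := by
  rw [mixture, integral_finsetSum_measure fun i _ => (hF i).smul_measure ENNReal.ofReal_ne_top]
  simp only [integral_smul_measure, ENNReal.toReal_ofReal (hα _)]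

lemma isProbabilityMeasure_mixture (hα : ∀ i, 0 ≤ α i) (hα_sum : ∑ i, α i = 1)
    [∀ i, IsProbabilityMeasure (ν i)] : IsProbabilityMeasure (mixture α ν) := by
  constructor
  simp [mixture, ← ENNReal.ofReal_sum_of_nonneg fun i _ => hα i, hα_sum]

variable {p : ι → Ω → ℝ} {m : Measure Ω}

lemma mixture_eq_withDensity (hα : ∀ i, 0 ≤ α i) (hp_meas : ∀ i, Measurable (p i))
    (hp : ∀ i x, 0 ≤ p i x) (hν : ∀ i, ν i = m.withDensity fun x => ENNReal.ofReal (p i x)) :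
    mixture α ν = m.withDensity fun x => ENNReal.ofReal (∑ i, α i * p i x) := by
  have hsum : ∀ x, ENNReal.ofReal (∑ i, α i * p i x) =
      ∑ i, ENNReal.ofReal (α i) * ENNReal.ofReal (p i x) := fun x => by
    rw [ENNReal.ofReal_sum_of_nonneg fun i _ => mul_nonneg (hα i) (hp i x)]
    simp only [ENNReal.ofReal_mul (hα _)]
  ext s hs
  simp only [mixture, Measure.coe_finsetSum, Finset.sum_apply, Measure.smul_apply, hν,
    withDensity_apply _ hs, smul_eq_mul, hsum]
  rw [lintegral_finsetSum _ fun i _ => (hp_meas i).ennreal_ofReal.const_mul _]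
  simp only [lintegral_const_mul' _ _ ENNReal.ofReal_ne_top]

lemma ae_sum_pos_mixture (hα : ∀ i, 0 ≤ α i) (hp_meas : ∀ i, Measurable (p i))
    (hp : ∀ i x, 0 ≤ p i x) (hν : ∀ i, ν i = m.withDensity fun x => ENNReal.ofReal (p i x)) :
    ∀ᵐ x ∂(mixture α ν), 0 < ∑ i, α i * p i x := by
  rw [mixture_eq_withDensity hα hp_meas hp hν, ae_withDensity_iff (by fun_prop)]
  exact ae_of_all _ fun x hx => ENNReal.ofReal_pos.1 (pos_iff_ne_zero.2 hx)

lemma measurable_mixtureWeight (hp_meas : ∀ i, Measurable (p i)) (i : ι) :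
    Measurable (mixtureWeight α p i) := by
  unfold mixtureWeight
  fun_prop

lemma withDensity_mixtureWeight (hα : ∀ i, 0 ≤ α i) (hp_meas : ∀ i, Measurable (p i))
    (hp : ∀ i x, 0 ≤ p i x) (hν : ∀ i, ν i = m.withDensity fun x => ENNReal.ofReal (p i x))
    (i : ι) :
    (mixture α ν).withDensity (fun x => ENNReal.ofReal (mixtureWeight α p i x)) =
      ENNReal.ofReal (α i) • ν i := by
  rw [mixture_eq_withDensity hα hp_meas hp hν, ← withDensity_mul _ (by fun_prop)
    (measurable_mixtureWeight hp_meas i).ennreal_ofReal, hν i,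
    ← withDensity_smul _ (hp_meas i).ennreal_ofReal]
  congr 1
  funext x
  simp only [Pi.mul_apply, Pi.smul_apply, smul_eq_mul]
  rw [← ENNReal.ofReal_mul (Finset.sum_nonneg fun j _ => mul_nonneg (hα j) (hp j x)),
    sum_mul_mixtureWeight hα hp, ENNReal.ofReal_mul (hα i)]

lemma integral_mixtureWeight_smul {E : Type*} [NormedAddCommGroup E] [NormedSpace ℝ E]
    (hα : ∀ i, 0 ≤ α i) (hp_meas : ∀ i, Measurable (p i)) (hp : ∀ i x, 0 ≤ p i x)
    (hν : ∀ i, ν i = m.withDensity fun x => ENNReal.ofReal (p i x)) (i : ι) (F : Ω → E) :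
    ∫ x, mixtureWeight α p i x • F x ∂(mixture α ν) = α i • ∫ x, F x ∂(ν i) := by
  have hw : Measurable fun x => (mixtureWeight α p i x).toNNReal :=
    (measurable_mixtureWeight hp_meas i).real_toNNReal
  calc ∫ x, mixtureWeight α p i x • F x ∂(mixture α ν)
      = ∫ x, (mixtureWeight α p i x).toNNReal • F x ∂(mixture α ν) := by
        simp only [NNReal.smul_def, Real.coe_toNNReal _ (mixtureWeight_nonneg hα hp i _)]
    _ = ∫ x, F x ∂(ENNReal.ofReal (α i) • ν i) := by
        rw [← withDensity_mixtureWeight hα hp_meas hp hν i]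
        exact (integral_withDensity_eq_integral_smul hw F).symm
    _ = α i • ∫ x, F x ∂(ν i) := by
        rw [integral_smul_measure, ENNReal.toReal_ofReal (hα i)]

lemma integrable_mixtureWeight_smul {E : Type*} [NormedAddCommGroup E] [NormedSpace ℝ E]
    (hα : ∀ i, 0 ≤ α i) (hp_meas : ∀ i, Measurable (p i)) (hp : ∀ i x, 0 ≤ p i x)
    (hν : ∀ i, ν i = m.withDensity fun x => ENNReal.ofReal (p i x)) {i : ι} {F : Ω → E}
    (hF : Integrable F (ν i)) :
    Integrable (fun x => mixtureWeight α p i x • F x) (mixture α ν) := by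
  have hw : Measurable fun x => (mixtureWeight α p i x).toNNReal :=
    (measurable_mixtureWeight hp_meas i).real_toNNReal
  have hsmul := (integrable_withDensity_iff_integrable_smul hw).1 <| by
    rw [show (fun x => ((mixtureWeight α p i x).toNNReal : ENNReal)) =
      fun x => ENNReal.ofReal (mixtureWeight α p i x) from rfl,
      withDensity_mixtureWeight hα hp_meas hp hν i]
    exact hF.smul_measure ENNReal.ofReal_ne_top
  simpa only [NNReal.smul_def, Real.coe_toNNReal _ (mixtureWeight_nonneg hα hp i _)] using hsmul

end Mixture

lemma integral_abs_sub_le_integral_abs_sub {Ω : Type*} [MeasurableSpace Ω] {ρ : Measure Ω}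
    {g h l : Ω → ℝ} (hg : Integrable g ρ) (hh : Integrable h ρ) (hl : Integrable l ρ)
    (hhg : h ≤ᵐ[ρ] g) (hlg : l ≤ᵐ[ρ] g) (hhl : ∫ x, l x ∂ρ ≤ ∫ x, h x ∂ρ) :
    ∫ x, |g x - h x| ∂ρ ≤ ∫ x, |g x - l x| ∂ρ := by
  have habs : ∀ {u : Ω → ℝ}, Integrable u ρ → u ≤ᵐ[ρ] g →
      ∫ x, |g x - u x| ∂ρ = ∫ x, g x ∂ρ - ∫ x, u x ∂ρ := fun hu hug => by
    rw [← integral_sub hg hu]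
    exact integral_congr_ae (hug.mono fun x hx => abs_of_nonneg (sub_nonneg.2 hx))
  rw [habs hh hhg, habs hl hlg]
  linarith

section MultipleLinearization

variable {E F ι : Type*} [NormedAddCommGroup E] [NormedSpace ℝ E]
  [NormedAddCommGroup F] [NormedSpace ℝ F] [Fintype ι] {α : ι → ℝ} {p : ι → E → ℝ} {μ : ι → E}

noncomputable def mixtureLinearization (α : ι → ℝ) (p : ι → E → ℝ) (μ : ι → E) (f : E → F)
    (x : E) : F :=
  ∑ i, mixtureWeight α p i x • linearization f (μ i) x

lemma mixtureLinearization_neg (g : E → ℝ) (x : E) :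
    mixtureLinearization α p μ (-g) x = -mixtureLinearization α p μ g x := by
  simp [mixtureLinearization, linearization_neg]

lemma mixtureLinearization_comp_clm {G : Type*} [NormedAddCommGroup G] [NormedSpace ℝ G]
    (L : F →L[ℝ] G) {f : E → F} (hf : ∀ i, DifferentiableAt ℝ f (μ i)) (x : E) :
    mixtureLinearization α p μ (fun y => L (f y)) x = L (mixtureLinearization α p μ f x) := by
  simp [mixtureLinearization, linearization_comp_clm L (hf _)]

lemma ConvexOn.mixtureLinearization_le {g : E → ℝ} (hg : ConvexOn ℝ Set.univ g)
    (hd : ∀ i, DifferentiableAt ℝ g (μ i)) (hα : ∀ i, 0 ≤ α i) (hp : ∀ i x, 0 ≤ p i x) {x : E}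
    (hx : 0 < ∑ i, α i * p i x) : mixtureLinearization α p μ g x ≤ g x :=
  calc mixtureLinearization α p μ g x
      ≤ ∑ i, mixtureWeight α p i x * g x := Finset.sum_le_sum fun i _ =>
        mul_le_mul_of_nonneg_left (hg.linearization_le (hd _) x) (mixtureWeight_nonneg hα hp i x)
    _ = g x := by rw [← Finset.sum_mul, sum_mixtureWeight hx, one_mul]

variable [MeasurableSpace E] {ν : ι → Measure E} {m : Measure E}

lemma integrable_mixtureLinearization [∀ i, IsFiniteMeasure (ν i)]
    (hα : ∀ i, 0 ≤ α i) (hp_meas : ∀ i, Measurable (p i)) (hp : ∀ i x, 0 ≤ p i x)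
    (hν : ∀ i, ν i = m.withDensity fun x => ENNReal.ofReal (p i x))
    (hmom : ∀ i, Integrable (fun x => x) (ν i)) (f : E → F) :
    Integrable (mixtureLinearization α p μ f) (mixture α ν) :=
  integrable_finsetSum _ fun i _ =>
    integrable_mixtureWeight_smul hα hp_meas hp hν (integrable_linearization (hmom i) f (μ i))

lemma integral_mixtureLinearization [CompleteSpace E] [CompleteSpace F]
    [∀ i, IsProbabilityMeasure (ν i)]
    (hα : ∀ i, 0 ≤ α i) (hp_meas : ∀ i, Measurable (p i)) (hp : ∀ i x, 0 ≤ p i x)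
    (hν : ∀ i, ν i = m.withDensity fun x => ENNReal.ofReal (p i x))
    (hmom : ∀ i, Integrable (fun x => x) (ν i)) (hμ : ∀ i, μ i = ∫ x, x ∂(ν i)) (f : E → F) :
    ∫ x, mixtureLinearization α p μ f x ∂(mixture α ν) = ∑ i, α i • f (μ i) := by
  simp only [mixtureLinearization]
  rw [integral_finsetSum _ fun i _ =>
    integrable_mixtureWeight_smul hα hp_meas hp hν (integrable_linearization (hmom i) f (μ i))]
  simp only [integral_mixtureWeight_smul hα hp_meas hp hν, integral_linearization (hmom _),
    ← hμ, linearization_self]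

lemma integral_linearization_mixture [CompleteSpace E] [CompleteSpace F]
    [∀ i, IsProbabilityMeasure (ν i)] (hα : ∀ i, 0 ≤ α i) (hα_sum : ∑ i, α i = 1)
    (hmom : ∀ i, Integrable (fun x => x) (ν i)) (hμ : ∀ i, μ i = ∫ x, x ∂(ν i)) (f : E → F) :
    ∫ x, linearization f (∑ i, α i • μ i) x ∂(mixture α ν) = f (∑ i, α i • μ i) := by
  have := isProbabilityMeasure_mixture (ν := ν) hα hα_sum
  rw [integral_linearization (integrable_mixture hmom), integral_mixture hα hmom]
  simp only [← hμ, linearization_self]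

theorem integral_abs_sub_mixtureLinearization_le_of_convexOn [CompleteSpace E]
    [∀ i, IsProbabilityMeasure (ν i)] (hα : ∀ i, 0 ≤ α i) (hα_sum : ∑ i, α i = 1)
    (hp_meas : ∀ i, Measurable (p i)) (hp : ∀ i x, 0 ≤ p i x)
    (hν : ∀ i, ν i = m.withDensity fun x => ENNReal.ofReal (p i x))
    (hmom : ∀ i, Integrable (fun x => x) (ν i)) (hμ : ∀ i, μ i = ∫ x, x ∂(ν i)) {g : E → ℝ}
    (hg : ConvexOn ℝ Set.univ g) (hd : Differentiable ℝ g) (hint : ∀ i, Integrable g (ν i)) :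
    ∫ x, |g x - mixtureLinearization α p μ g x| ∂(mixture α ν) ≤
      ∫ x, |g x - linearization g (∑ i, α i • μ i) x| ∂(mixture α ν) := by
  have := isProbabilityMeasure_mixture (ν := ν) hα hα_sum
  refine integral_abs_sub_le_integral_abs_sub (integrable_mixture hint)
    (integrable_mixtureLinearization hα hp_meas hp hν hmom g)
    (integrable_linearization (integrable_mixture hmom) g _)
    ((ae_sum_pos_mixture hα hp_meas hp hν).mono fun _ hx =>
      hg.mixtureLinearization_le (fun i => hd (μ i)) hα hp hx)
    (ae_of_all _ fun x => hg.linearization_le (hd _) x) ?_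
  rw [integral_linearization_mixture hα hα_sum hmom hμ,
    integral_mixtureLinearization hα hp_meas hp hν hmom hμ]
  exact hg.map_sum_le (fun i _ => hα i) hα_sum fun i _ => Set.mem_univ _

theorem integral_abs_sub_mixtureLinearization_le [CompleteSpace E]
    [∀ i, IsProbabilityMeasure (ν i)] (hα : ∀ i, 0 ≤ α i) (hα_sum : ∑ i, α i = 1)
    (hp_meas : ∀ i, Measurable (p i)) (hp : ∀ i x, 0 ≤ p i x)
    (hν : ∀ i, ν i = m.withDensity fun x => ENNReal.ofReal (p i x))
    (hmom : ∀ i, Integrable (fun x => x) (ν i)) (hμ : ∀ i, μ i = ∫ x, x ∂(ν i)) {g : E → ℝ}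
    (hg : ConvexOn ℝ Set.univ g ∨ ConcaveOn ℝ Set.univ g) (hd : Differentiable ℝ g)
    (hint : ∀ i, Integrable g (ν i)) :
    ∫ x, |g x - mixtureLinearization α p μ g x| ∂(mixture α ν) ≤
      ∫ x, |g x - linearization g (∑ i, α i • μ i) x| ∂(mixture α ν) := by
  rcases hg with hg | hg
  · exact integral_abs_sub_mixtureLinearization_le_of_convexOn hα hα_sum hp_meas hp hν hmom hμ
      hg hd hint
  · simpa only [mixtureLinearization_neg, linearization_neg, Pi.neg_apply, neg_sub_neg,
      abs_sub_comm] using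
      integral_abs_sub_mixtureLinearization_le_of_convexOn hα hα_sum hp_meas hp hν hmom hμ
        hg.neg hd.neg fun i => (hint i).neg

end MultipleLinearization

/-- Theorem 2 of the paper: for a mixture `ρ = Σ_i α_i ν_i` with component means `μ_i`
and mixture mean `μ`, if every component `f⁽ᵏ⁾` of the differentiable map `f` is
(globally) convex or concave and integrable w.r.t. each `ν_i`, then the
multiple-linearization approximation is at least as accurate as the single
linearization in expected 1-norm:
`∫ ‖f − f_ML‖₁ dρ ≤ ∫ ‖f − ℓ_μ f‖₁ dρ`. -/
theorem multiple_linearization_beats_single_linearization {n m N : ℕ}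
    (ν : Fin N → Measure (EuclideanSpace ℝ (Fin n)))
    (hprob : ∀ i, IsProbabilityMeasure (ν i))
    (α : Fin N → ℝ) (hα : ∀ i, 0 ≤ α i) (hαsum : ∑ i, α i = 1)
    (p : Fin N → EuclideanSpace ℝ (Fin n) → ℝ)
    (hp_meas : ∀ i, Measurable (p i)) (hp_nonneg : ∀ i x, 0 ≤ p i x)
    (hdens : ∀ i, ν i = volume.withDensity (fun x => ENNReal.ofReal (p i x)))
    (μ : Fin N → EuclideanSpace ℝ (Fin n))
    (hμ : ∀ i, μ i = ∫ x, x ∂(ν i))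
    (μbar : EuclideanSpace ℝ (Fin n)) (hμbar : μbar = ∑ i, α i • μ i)
    (hmom1 : ∀ i, Integrable (fun x => x) (ν i))
    (f : EuclideanSpace ℝ (Fin n) → EuclideanSpace ℝ (Fin m))
    (hf : Differentiable ℝ f)
    (hconvconc : ∀ k : Fin m,
      ConvexOn ℝ Set.univ (fun x => f x k) ∨ ConcaveOn ℝ Set.univ (fun x => f x k))
    (hint : ∀ (k : Fin m) (i : Fin N), Integrable (fun x => f x k) (ν i))
    (fML : EuclideanSpace ℝ (Fin n) → EuclideanSpace ℝ (Fin m))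
    (hfML : ∀ x, fML x =
      if 0 < ∑ i, α i * p i x then
        ∑ i, ((α i * p i x) / (∑ j, α j * p j x)) •
          (f (μ i) + fderiv ℝ f (μ i) (x - μ i))
      else 0) :
    ∫ x, ∑ k, |f x k - fML x k| ∂(∑ i, ENNReal.ofReal (α i) • ν i)
      ≤ ∫ x, ∑ k, |f x k - (f μbar + fderiv ℝ f μbar (x - μbar)) k|
          ∂(∑ i, ENNReal.ofReal (α i) • ν i) := by
  obtain rfl : fML = mixtureLinearization α p μ f :=
    funext fun x => by rw [hfML, ite_sum_div_smul_eq_sum_mixtureWeight_smul hα hp_nonneg]; rfl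
  have hcoord : ∀ k x, mixtureLinearization α p μ f x k =
      mixtureLinearization α p μ (fun y => f y k) x := fun k x =>
    (mixtureLinearization_comp_clm (EuclideanSpace.proj k) (fun i => hf _) x).symm
  have hcoord' : ∀ k x, (f μbar + fderiv ℝ f μbar (x - μbar)) k =
      linearization (fun y => f y k) μbar x := fun k x =>
    (linearization_comp_clm (EuclideanSpace.proj k) (hf _) x).symm
  simp only [hcoord, hcoord']
  subst hμbar
  have := isProbabilityMeasure_mixture (ν := ν) hα hαsum
  change ∫ x, _ ∂(mixture α ν) ≤ ∫ x, _ ∂(mixture α ν)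
  rw [integral_finsetSum _ fun k _ => ?_, integral_finsetSum _ fun k _ => ?_]
  · exact Finset.sum_le_sum fun k _ => integral_abs_sub_mixtureLinearization_le hα hαsum hp_meas
      hp_nonneg hdens hmom1 hμ (hconvconc k) (differentiable_euclidean.1 hf k) (hint k)
  · exact ((integrable_mixture (hint k)).sub
      (integrable_linearization (integrable_mixture hmom1) _ _)).abs
  · exact ((integrable_mixture (hint k)).sub
      (integrable_mixtureLinearization hα hp_meas hp_nonneg hdens hmom1 _)).abs
end
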